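/- (Quadratic convergence of CDA-Newton, Theorem 4.1) Assume 8α < 1 where α = M ν⁻² F, set β = ν(1 − 2α), and assume μ ≥ β/(4 C_I² H²). Let u ∈ V be a weak NSE solution and let (u_k)_{k≥0} be a sequence in V such that for every k, u_{k+1} is a CDA-Newton step from u_k, and such that the iterates are stable: ‖G u_k‖ ≤ 2 ν⁻¹ F for every k. If the initial guess satisfies (M √(2 C_I H)/β) ‖G(u − u_0)‖ < 1, then for every k, ‖G(u − u_{k+1})‖ ≤ (M √(2 C_I H)/β) ‖G(u − u_k)‖², and ‖G(u − u_k)‖ → 0 as k → ∞. -/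

import Mathlib

/-!
Testing the error equation of a CDA-Newton step with the new error `e = u - u_{k+1}` kills
`b(u_k, e, e)`, and the stability bound on `u_k` absorbs `b(e, u_k, e)` into the viscous term, leaving
`β ‖G e‖² + μ ‖I_H e‖² ≤ M ‖G(u - u_k)‖² ‖e‖^{1/2} ‖G e‖^{1/2}`. The nudging term controls the
remaining `‖e‖` through `‖e‖ ≤ C_I H ‖G e‖ + ‖I_H e‖`, and the lower bound on `μ` balances the two
contributions, which yields the quadratic estimate. Iterated from `C ‖G(u - u_0)‖ < 1`, it forces
`C ‖G(u - u_k)‖ ≤ (C ‖G(u - u_0)‖)^(k+1)`.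
-/

open Filter Topology

theorem mul_le_mul_sqrt_of_sq_add_le {β c g i S : ℝ} (hβ : 0 ≤ β) (hc : 0 < c) (hS : 0 ≤ S)
    (h : β * (g ^ 2 + i ^ 2 / (4 * c ^ 2)) ≤ S * √(g * (c * g + i))) :
    β * g ≤ S * √(2 * c) := by
  set Q := g ^ 2 + i ^ 2 / (4 * c ^ 2)
  have hQ : 0 ≤ Q := by positivity
  have hgQ : g * (c * g + i) ≤ 2 * c * Q := by
    have : 2 * c * Q - g * (c * g + i) = ((c * g - i) ^ 2 + c ^ 2 * g ^ 2) / (2 * c) := by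
      simp only [Q]; field_simp; ring
    have : 0 ≤ ((c * g - i) ^ 2 + c ^ 2 * g ^ 2) / (2 * c) := by positivity
    linarith
  have hβQ : β * √Q * √Q ≤ S * √(2 * c) * √Q := calc
    β * √Q * √Q = β * Q := by rw [mul_assoc, Real.mul_self_sqrt hQ]
    _ ≤ S * √(g * (c * g + i)) := h
    _ ≤ S * √(2 * c * Q) := by gcongr
    _ = S * √(2 * c) * √Q := by rw [Real.sqrt_mul (by positivity), mul_assoc]
  have hβsqrt : β * √Q ≤ S * √(2 * c) := by
    rcases (Real.sqrt_nonneg Q).eq_or_lt with hQ0 | hQ0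
    · rw [← hQ0, mul_zero]; positivity
    · exact le_of_mul_le_mul_right hβQ hQ0
  have hg : g ≤ √Q :=
    (le_abs_self g).trans (Real.abs_le_sqrt (le_add_of_nonneg_right (by positivity)))
  exact (mul_le_mul_of_nonneg_left hg hβ).trans hβsqrt

theorem tendsto_zero_of_le_mul_sq {x : ℕ → ℝ} {C : ℝ} (hC : 0 < C) (hx : ∀ n, 0 ≤ x n)
    (hstep : ∀ n, x (n + 1) ≤ C * x n ^ 2) (h0 : C * x 0 < 1) :
    Tendsto x atTop (𝓝 0) := by
  set q := C * x 0
  have hq : 0 ≤ q := mul_nonneg hC.le (hx 0)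
  have hbound : ∀ n, C * x n ≤ q ^ (n + 1) := by
    intro n
    induction n with
    | zero => rw [zero_add, pow_one]
    | succ n ih => calc
        C * x (n + 1) ≤ (C * x n) ^ 2 := by nlinarith [hstep n]
        _ ≤ (q ^ (n + 1)) ^ 2 := by gcongr; exact mul_nonneg hC.le (hx n)
        _ = q ^ (n + 1 + 1) * q ^ n := by ring
        _ ≤ q ^ (n + 1 + 1) := mul_le_of_le_one_right (by positivity) (pow_le_one₀ hq h0.le)
  have hlim : Tendsto (fun n ↦ q ^ (n + 1) / C) atTop (𝓝 0) := by
    simpa using ((tendsto_pow_atTop_nhds_zero_of_lt_one hq h0).comp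
      (tendsto_add_atTop_nat 1)).div_const C
  exact squeeze_zero hx (fun n ↦ (le_div_iff₀' hC).2 (hbound n)) hlim

section CDANewton

variable {V W : Type*} [NormedAddCommGroup V] [InnerProductSpace ℝ V]
  [NormedAddCommGroup W] [InnerProductSpace ℝ W]
  (G : V →ₗ[ℝ] W) (b : V →ₗ[ℝ] V →ₗ[ℝ] V →ₗ[ℝ] ℝ) (f : V →ₗ[ℝ] ℝ) (ν μ : ℝ) (IH : V →ₗ[ℝ] V)

def IsWeakNSESolution (u : V) : Prop :=
  ∀ v : V, ν * (inner ℝ (G u) (G v) : ℝ) + b u u v = f v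

/-- `w'` is a CDA-Newton step from `w`, nudged towards the observed solution `u`. -/
def IsCDANewtonStep (u w w' : V) : Prop :=
  ∀ v : V, ν * (inner ℝ (G w') (G v) : ℝ) + b w w' v + b w' w v
    + μ * (inner ℝ (IH (w' - u)) (IH v) : ℝ) = f v + b w w v

variable {G b f ν μ IH} {u w w' : V}

theorem IsCDANewtonStep.error_eq (hu : IsWeakNSESolution G b f ν u)
    (hstep : IsCDANewtonStep G b f ν μ IH u w w') (v : V) :
    ν * (inner ℝ (G (u - w')) (G v) : ℝ) + μ * (inner ℝ (IH (u - w')) (IH v) : ℝ)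
      + b (u - w) (u - w) v + b w (u - w') v + b (u - w') w v = 0 := by
  have hu := hu v
  have hstep := hstep v
  simp only [map_sub, LinearMap.sub_apply, inner_sub_left] at hu hstep ⊢
  linarith

theorem IsCDANewtonStep.energy_le {M K : ℝ} (hM : 0 ≤ M) (hbskew : ∀ u v : V, b u v v = 0)
    (hb2 : ∀ u w v : V, |b u w v| ≤ M * ‖G u‖ * ‖G w‖ * ‖G v‖)
    (hb3 : ∀ u w v : V, |b u w v| ≤ M * ‖G u‖ * ‖G w‖ * √‖v‖ * √‖G v‖)
    (hu : IsWeakNSESolution G b f ν u) (hstep : IsCDANewtonStep G b f ν μ IH u w w')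
    (hK : ‖G w‖ ≤ K) :
    (ν - M * K) * ‖G (u - w')‖ ^ 2 + μ * ‖IH (u - w')‖ ^ 2
      ≤ M * ‖G (u - w)‖ ^ 2 * √‖u - w'‖ * √‖G (u - w')‖ := by
  set e := u - w'
  have herr := hstep.error_eq hu e
  rw [hbskew, real_inner_self_eq_norm_sq, real_inner_self_eq_norm_sq] at herr
  have hlin : |b e w e| ≤ M * K * ‖G e‖ ^ 2 := calc
    |b e w e| ≤ M * ‖G e‖ * ‖G w‖ * ‖G e‖ := hb2 e w e
    _ = M * ‖G w‖ * ‖G e‖ ^ 2 := by ring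
    _ ≤ M * K * ‖G e‖ ^ 2 := by gcongr
  have hquad : |b (u - w) (u - w) e| ≤ M * ‖G (u - w)‖ ^ 2 * √‖e‖ * √‖G e‖ := by
    simpa only [sq, mul_assoc] using hb3 (u - w) (u - w) e
  linarith [neg_abs_le (b e w e), neg_abs_le (b (u - w) (u - w) e)]

theorem IsCDANewtonStep.norm_error_le {M K c β : ℝ} (hM : 0 ≤ M) (hc : 0 < c) (hβ : 0 < β)
    (hbskew : ∀ u v : V, b u v v = 0)
    (hb2 : ∀ u w v : V, |b u w v| ≤ M * ‖G u‖ * ‖G w‖ * ‖G v‖)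
    (hb3 : ∀ u w v : V, |b u w v| ≤ M * ‖G u‖ * ‖G w‖ * √‖v‖ * √‖G v‖)
    (hIH : ∀ v : V, ‖v - IH v‖ ≤ c * ‖G v‖) (hμ : β / (4 * c ^ 2) ≤ μ) (hβK : β ≤ ν - M * K)
    (hu : IsWeakNSESolution G b f ν u) (hstep : IsCDANewtonStep G b f ν μ IH u w w')
    (hK : ‖G w‖ ≤ K) :
    ‖G (u - w')‖ ≤ M * √(2 * c) / β * ‖G (u - w)‖ ^ 2 := by
  set e := u - w'
  have henergy := hstep.energy_le hM hbskew hb2 hb3 hu hK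
  have he : ‖e‖ ≤ c * ‖G e‖ + ‖IH e‖ := calc
    ‖e‖ ≤ ‖e - IH e‖ + ‖IH e‖ := norm_le_norm_sub_add e (IH e)
    _ ≤ c * ‖G e‖ + ‖IH e‖ := by gcongr; exact hIH e
  have hsqrt : √‖e‖ * √‖G e‖ ≤ √(‖G e‖ * (c * ‖G e‖ + ‖IH e‖)) := by
    rw [← Real.sqrt_mul (norm_nonneg e), mul_comm]
    gcongr
  have hkey : β * (‖G e‖ ^ 2 + ‖IH e‖ ^ 2 / (4 * c ^ 2))
      ≤ M * ‖G (u - w)‖ ^ 2 * √(‖G e‖ * (c * ‖G e‖ + ‖IH e‖)) := calc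
    β * (‖G e‖ ^ 2 + ‖IH e‖ ^ 2 / (4 * c ^ 2))
        = β * ‖G e‖ ^ 2 + β / (4 * c ^ 2) * ‖IH e‖ ^ 2 := by ring
    _ ≤ (ν - M * K) * ‖G e‖ ^ 2 + μ * ‖IH e‖ ^ 2 := by gcongr
    _ ≤ M * ‖G (u - w)‖ ^ 2 * (√‖e‖ * √‖G e‖) := by rw [← mul_assoc]; exact henergy
    _ ≤ M * ‖G (u - w)‖ ^ 2 * √(‖G e‖ * (c * ‖G e‖ + ‖IH e‖)) := by gcongr
  have := mul_le_mul_sqrt_of_sq_add_le hβ.le hc (by positivity) hkey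
  rw [div_mul_eq_mul_div, le_div_iff₀' hβ]
  linarith

end CDANewton

theorem cda_newton_quadratic_convergence_general
    {V W : Type*} [NormedAddCommGroup V] [InnerProductSpace ℝ V]
    [NormedAddCommGroup W] [InnerProductSpace ℝ W]
    (G : V →ₗ[ℝ] W) (b : V →ₗ[ℝ] V →ₗ[ℝ] V →ₗ[ℝ] ℝ) (f : V →ₗ[ℝ] ℝ)
    (M F ν : ℝ) (hM : 0 < M) (hν : 0 < ν)
    (hbskew : ∀ u v : V, b u v v = 0)
    (hb2 : ∀ u w v : V, |b u w v| ≤ M * ‖G u‖ * ‖G w‖ * ‖G v‖)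
    (hb3 : ∀ u w v : V, |b u w v| ≤ M * ‖G u‖ * ‖G w‖ * Real.sqrt ‖v‖ * Real.sqrt ‖G v‖)
    (IH : V →ₗ[ℝ] V) (CI H μ : ℝ) (hCI : 0 < CI) (hH : 0 < H)
    (hIH : ∀ v : V, ‖v - IH v‖ ≤ CI * H * ‖G v‖)
    (u : V) (hu : ∀ v : V, ν * (inner ℝ (G u) (G v) : ℝ) + b u u v = f v)
    (hα : 8 * (M * F / ν ^ 2) < 1)
    (hμ' : μ ≥ (ν * (1 - 2 * (M * F / ν ^ 2))) / (4 * CI ^ 2 * H ^ 2))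
    (uk : ℕ → V)
    (hstep : ∀ k, ∀ v : V, ν * (inner ℝ (G (uk (k + 1))) (G v) : ℝ) + b (uk k) (uk (k + 1)) v
      + b (uk (k + 1)) (uk k) v + μ * (inner ℝ (IH (uk (k + 1) - u)) (IH v) : ℝ)
      = f v + b (uk k) (uk k) v)
    (hstable : ∀ k, ‖G (uk k)‖ ≤ 2 * ν⁻¹ * F)
    (hinit : (M * Real.sqrt (2 * CI * H) / (ν * (1 - 2 * (M * F / ν ^ 2)))) * ‖G (u - uk 0)‖ < 1)
    : (∀ k, ‖G (u - uk (k + 1))‖ ≤ (M * Real.sqrt (2 * CI * H) / (ν * (1 - 2 * (M * F / ν ^ 2)))) * ‖G (u - uk k)‖ ^ 2) ∧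
      Filter.Tendsto (fun k => ‖G (u - uk k)‖) Filter.atTop (nhds 0) := by
  set β := ν * (1 - 2 * (M * F / ν ^ 2))
  have hβ : 0 < β := mul_pos hν (by linarith)
  have hβK : β ≤ ν - M * (2 * ν⁻¹ * F) := le_of_eq (by simp only [β]; field_simp)
  have hμ : β / (4 * (CI * H) ^ 2) ≤ μ := by rwa [mul_pow, ← mul_assoc]
  rw [mul_assoc 2 CI H] at hinit ⊢
  have hquad (k : ℕ) := IsCDANewtonStep.norm_error_le hM.le (mul_pos hCI hH) hβ hbskew hb2 hb3
    hIH hμ hβK hu (hstep k) (hstable k)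
  exact ⟨hquad, tendsto_zero_of_le_mul_sq (by positivity) (fun k ↦ norm_nonneg _) hquad hinit⟩

theorem cda_newton_quadratic_convergence
    {V W : Type*} [NormedAddCommGroup V] [InnerProductSpace ℝ V]
    [NormedAddCommGroup W] [InnerProductSpace ℝ W]
    (G : V →ₗ[ℝ] W) (b : V →ₗ[ℝ] V →ₗ[ℝ] V →ₗ[ℝ] ℝ) (f : V →ₗ[ℝ] ℝ)
    (M F ν : ℝ) (hM : 0 < M) (hF : 0 ≤ F) (hν : 0 < ν)
    (hbskew : ∀ u v : V, b u v v = 0)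
    (hb1 : ∀ u w v : V, |b u w v| ≤ M * Real.sqrt ‖u‖ * Real.sqrt ‖G u‖ * ‖G w‖ * ‖G v‖)
    (hb2 : ∀ u w v : V, |b u w v| ≤ M * ‖G u‖ * ‖G w‖ * ‖G v‖)
    (hb3 : ∀ u w v : V, |b u w v| ≤ M * ‖G u‖ * ‖G w‖ * Real.sqrt ‖v‖ * Real.sqrt ‖G v‖)
    (hf : ∀ v : V, |f v| ≤ F * ‖G v‖)
    (IH : V →ₗ[ℝ] V) (CI H μ : ℝ) (hCI : 0 < CI) (hH : 0 < H) (hμ : 0 < μ)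
    (hIH : ∀ v : V, ‖v - IH v‖ ≤ CI * H * ‖G v‖)
    (u : V) (hu : ∀ v : V, ν * (inner ℝ (G u) (G v) : ℝ) + b u u v = f v)
    (hα : 8 * (M * F / ν ^ 2) < 1)
    (hμ' : μ ≥ (ν * (1 - 2 * (M * F / ν ^ 2))) / (4 * CI ^ 2 * H ^ 2))
    (uk : ℕ → V)
    (hstep : ∀ k, ∀ v : V, ν * (inner ℝ (G (uk (k + 1))) (G v) : ℝ) + b (uk k) (uk (k + 1)) v
      + b (uk (k + 1)) (uk k) v + μ * (inner ℝ (IH (uk (k + 1) - u)) (IH v) : ℝ)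
      = f v + b (uk k) (uk k) v)
    (hstable : ∀ k, ‖G (uk k)‖ ≤ 2 * ν⁻¹ * F)
    (hinit : (M * Real.sqrt (2 * CI * H) / (ν * (1 - 2 * (M * F / ν ^ 2)))) * ‖G (u - uk 0)‖ < 1)
    : (∀ k, ‖G (u - uk (k + 1))‖ ≤ (M * Real.sqrt (2 * CI * H) / (ν * (1 - 2 * (M * F / ν ^ 2)))) * ‖G (u - uk k)‖ ^ 2) ∧
      Filter.Tendsto (fun k => ‖G (u - uk k)‖) Filter.atTop (nhds 0) :=
  cda_newton_quadratic_convergence_general G b f M F ν hM hν hbskew hb2 hb3 IH CI H μ hCI hH hIH u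
    hu hα hμ' uk hstep hstable hinit
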